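/- Let x ∈ ℝ^{S_m} be any vector satisfying Q x = 0 (x a column vector indexed by S_m) and x_{(1,0)} + x_{(1,1)} = 1. Then for every integer n with 1 ≤ n ≤ m, the sum over r from 0 to n of x_{(n,r)} equals 1. (The entries x_{(n,r)} thus form, for each fixed n, a normalized distribution over the possible red-allele counts r, consistent with their interpretation as the stationary probabilities Pr[R = r | N = n] of the allele count among n sampled lineages.) -/

import Mathlib

/-!
Summing the equations `(Q x)_{(n+1,r)} = 0` over `r` is pairing `Q x` with the indicator of level
`n + 1`, i.e. pairing `x` with the sum of the rows of `Q` at level `n + 1`. In that row sum the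
mutation terms cancel column by column, and the coalescence terms leave `-(n+1)n/θ` on every column
of level `n + 1` and `(n+1)n/θ` on every column of level `n`. So `(n+1)n/θ · (s_n - s_{n+1}) = 0`,
where `s_n` is the sum of `x` over level `n`; since `θ ≠ 0`, `s_n` is constant, and `s_1 = 1`.
-/

open Finset

/-- The state space `S_m = {(n,r) : 1 ≤ n ≤ m, 0 ≤ r ≤ n}`, realised as a subtype of
`Fin (m+1) × Fin (m+1)` (first coordinate `n`, second coordinate `r`). -/
abbrev SmIdx (m : ℕ) := {p : Fin (m + 1) × Fin (m + 1) // 1 ≤ (p.1 : ℕ) ∧ (p.2 : ℕ) ≤ (p.1 : ℕ)}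

/-- The entry of the matrix `Q` in row `(n,r)` and column `(n',r')`:
`Q_{(n,r),(n,r-1)} = (n-r+1)v`, `Q_{(n,r),(n,r+1)} = (r+1)u`,
`Q_{(n,r),(n-1,r)} = (n-1-r)n/θ`, `Q_{(n,r),(n-1,r-1)} = (r-1)n/θ`,
`Q_{(n,r),(n,r)} = -n(n-1)/θ - (n-r)v - ru`, and all other entries zero. -/
noncomputable def QEnt (θ u v : ℝ) (n r n' r' : ℕ) : ℝ :=
  if n' = n ∧ r' + 1 = r then ((n : ℝ) - (r : ℝ) + 1) * v
  else if n' = n ∧ r' = r + 1 then ((r : ℝ) + 1) * u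
  else if n' + 1 = n ∧ r' = r then ((n : ℝ) - 1 - (r : ℝ)) * (n : ℝ) / θ
  else if n' + 1 = n ∧ r' + 1 = r then ((r : ℝ) - 1) * (n : ℝ) / θ
  else if n' = n ∧ r' = r then
    -((n : ℝ) * ((n : ℝ) - 1) / θ) - ((n : ℝ) - (r : ℝ)) * v - (r : ℝ) * u
  else 0

/-- The matrix `Q`, rows and columns indexed by `S_m`. -/
noncomputable def coalQ (m : ℕ) (θ u v : ℝ) : Matrix (SmIdx m) (SmIdx m) ℝ :=
  fun p q => QEnt θ u v (p.1.1 : ℕ) (p.1.2 : ℕ) (q.1.1 : ℕ) (q.1.2 : ℕ)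

/-- The state `(1,0) ∈ S_m`. -/
def st10 (m : ℕ) (hm : 1 ≤ m) : SmIdx m :=
  ⟨(⟨1, Nat.lt_succ_of_le hm⟩, ⟨0, Nat.succ_pos m⟩), le_refl 1, Nat.zero_le 1⟩

/-- The state `(1,1) ∈ S_m`. -/
def st11 (m : ℕ) (hm : 1 ≤ m) : SmIdx m :=
  ⟨(⟨1, Nat.lt_succ_of_le hm⟩, ⟨1, Nat.lt_succ_of_le hm⟩), le_refl 1, le_refl 1⟩

open Matrix

section ColumnSums

variable (θ u v : ℝ)

lemma QEnt_same_level (n r r' : ℕ) :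
    QEnt θ u v n r n r' =
      (if r = r' + 1 then ((n : ℝ) - r') * v else 0) + (if r + 1 = r' then (r' : ℝ) * u else 0) +
        (if r = r' then -((n : ℝ) * (n - 1) / θ) - ((n : ℝ) - r') * v - r' * u else 0) := by
  unfold QEnt
  split_ifs <;> first | omega | (subst_vars; push_cast; ring)

lemma QEnt_level_below (n r r' : ℕ) :
    QEnt θ u v (n + 1) r n r' =
      (if r = r' then ((n : ℝ) - r') * (n + 1) / θ else 0) +
        (if r = r' + 1 then (r' : ℝ) * (n + 1) / θ else 0) := by
  unfold QEnt
  split_ifs <;> first | omega | (subst_vars; push_cast; ring)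

lemma QEnt_eq_zero_of_level {n r n' r' : ℕ} (h : n' ≠ n) (h' : n' + 1 ≠ n) :
    QEnt θ u v n r n' r' = 0 := by
  unfold QEnt
  split_ifs <;> first | omega | rfl

lemma sum_range_ite_succ_eq {M : Type*} [AddCommMonoid M] (N b : ℕ) (c : M) (hb : b ≤ N) :
    ∑ r ∈ range N, (if r + 1 = b then c else 0) = if b = 0 then 0 else c := by
  cases b with
  | zero => simp
  | succ b => simp [Nat.add_right_cancel_iff, show b < N by omega]

lemma sum_range_QEnt_same_level {n r' : ℕ} (hr' : r' ≤ n) :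
    ∑ r ∈ range (n + 1), QEnt θ u v n r n r' = -((n : ℝ) * (n - 1) / θ) := by
  simp only [QEnt_same_level, sum_add_distrib, sum_ite_eq', mem_range,
    sum_range_ite_succ_eq _ _ _ (Nat.le_succ_of_le hr'), if_pos (Nat.lt_succ_of_le hr')]
  obtain hr' | rfl := hr'.lt_or_eq <;> split_ifs <;> simp_all

lemma sum_range_QEnt_level_below {n r' : ℕ} (hr' : r' ≤ n) :
    ∑ r ∈ range (n + 2), QEnt θ u v (n + 1) r n r' = ((n : ℝ) + 1) * n / θ := by
  simp only [QEnt_level_below, sum_add_distrib, sum_ite_eq', mem_range,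
    if_pos (show r' < n + 2 by omega), if_pos (show r' + 1 < n + 2 by omega)]
  ring

lemma sum_range_QEnt_of_level {n n' r' : ℕ} (h : n' ≠ n) (h' : n' + 1 ≠ n) :
    ∑ r ∈ range (n + 1), QEnt θ u v n r n' r' = 0 :=
  sum_eq_zero fun _ _ => QEnt_eq_zero_of_level θ u v h h'

end ColumnSums

lemma sum_level_eq_sum_range {M : Type*} [AddCommMonoid M] {m n : ℕ} (hn : 1 ≤ n) (hnm : n ≤ m)
    (g : ℕ → M) :
    ∑ p ∈ univ.filter (fun p : SmIdx m => (p.1.1 : ℕ) = n), g p.1.2 =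
      ∑ r ∈ range (n + 1), g r := by
  refine sum_nbij' (fun p => p.1.2) (fun r => ⟨(⟨n, by omega⟩, ⟨min r n, by omega⟩), by simp [hn]⟩)
    ?_ ?_ ?_ ?_ (fun _ _ => rfl) <;> simp only [mem_filter, mem_univ, true_and, mem_range]
  · intro p _
    have := p.2.2
    omega
  · simp
  · intro p hp
    have := p.2.2
    ext <;> simp only <;> omega
  · intro r hr
    exact min_eq_left (Nat.lt_succ_iff.mp hr)

def levelIndicator (m n : ℕ) : SmIdx m → ℝ := fun p => if (p.1.1 : ℕ) = n then 1 else 0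

lemma levelIndicator_dotProduct (m n : ℕ) (x : SmIdx m → ℝ) :
    levelIndicator m n ⬝ᵥ x = ∑ p ∈ univ.filter (fun p : SmIdx m => (p.1.1 : ℕ) = n), x p := by
  simp [levelIndicator, dotProduct, sum_filter]

lemma levelIndicator_vecMul_coalQ {m n : ℕ} (hnm : n + 1 ≤ m) (θ u v : ℝ) :
    levelIndicator m (n + 1) ᵥ* coalQ m θ u v =
      (((n : ℝ) + 1) * n / θ) • (levelIndicator m n - levelIndicator m (n + 1)) := by
  ext q
  have hcol : (levelIndicator m (n + 1) ᵥ* coalQ m θ u v) q =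
      ∑ r ∈ range (n + 2), QEnt θ u v (n + 1) r q.1.1 q.1.2 := by
    rw [vecMul, levelIndicator_dotProduct, ← sum_level_eq_sum_range (m := m) (by omega) hnm]
    exact sum_congr rfl fun p hp => by simp only [coalQ, (mem_filter.mp hp).2]
  have hq := q.2.2
  rw [hcol]
  simp only [levelIndicator, Pi.smul_apply, Pi.sub_apply, smul_eq_mul]
  by_cases h1 : (q.1.1 : ℕ) = n + 1
  · rw [h1] at hq ⊢
    rw [sum_range_QEnt_same_level θ u v hq]
    simp
  by_cases h0 : (q.1.1 : ℕ) = n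
  · rw [h0] at hq ⊢
    rw [sum_range_QEnt_level_below θ u v hq]
    simp
  · rw [sum_range_QEnt_of_level θ u v h1 (by omega)]
    simp [h0, h1]

lemma sum_level_succ_of_mulVec_eq_zero {m n : ℕ} (hn : 1 ≤ n) (hnm : n + 1 ≤ m) {θ : ℝ}
    (hθ : θ ≠ 0) (u v : ℝ) {x : SmIdx m → ℝ} (hx : coalQ m θ u v *ᵥ x = 0) :
    ∑ p ∈ univ.filter (fun p : SmIdx m => (p.1.1 : ℕ) = n + 1), x p =
      ∑ p ∈ univ.filter (fun p : SmIdx m => (p.1.1 : ℕ) = n), x p := by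
  have hK : ((n : ℝ) + 1) * n / θ ≠ 0 := by positivity
  have h := congrArg (levelIndicator m (n + 1) ⬝ᵥ ·) hx
  simp only [dotProduct_mulVec, levelIndicator_vecMul_coalQ hnm, smul_dotProduct, sub_dotProduct,
    dotProduct_zero, smul_eq_mul, mul_eq_zero, hK, false_or, sub_eq_zero,
    levelIndicator_dotProduct] at h
  exact h.symm

lemma filter_level_one (m : ℕ) (hm : 1 ≤ m) :
    univ.filter (fun p : SmIdx m => (p.1.1 : ℕ) = 1) = {st10 m hm, st11 m hm} := by
  ext ⟨⟨n, r⟩, hn, hr⟩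
  simp only at hn hr
  simp only [mem_filter, mem_univ, true_and, mem_insert, mem_singleton, st10, st11,
    Subtype.mk.injEq, Prod.mk.injEq, Fin.ext_iff]
  omega

theorem stmt7_general (m : ℕ) (hm : 1 ≤ m) (θ u v : ℝ) (hθ : 0 < θ)
    (x : SmIdx m → ℝ) (hx : (coalQ m θ u v).mulVec x = 0)
    (hnorm : x (st10 m hm) + x (st11 m hm) = 1)
    (n : ℕ) (hn : 1 ≤ n) (hnm : n ≤ m) :
    ∑ p ∈ Finset.univ.filter (fun p : SmIdx m => (p.1.1 : ℕ) = n), x p = 1 := by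
  induction n, hn using Nat.le_induction with
  | base =>
    have h10_ne_11 : st10 m hm ≠ st11 m hm := by simp [st10, st11]
    rw [filter_level_one m hm, sum_pair h10_ne_11, hnorm]
  | succ n hn ih =>
    rw [sum_level_succ_of_mulVec_eq_zero hn hnm hθ.ne' u v hx, ih (by omega)]

/-- If `x ∈ ℝ^{S_m}` satisfies `Q x = 0` and `x_{(1,0)} + x_{(1,1)} = 1`, then for every `n`
with `1 ≤ n ≤ m` we have `∑_{r=0}^{n} x_{(n,r)} = 1`. -/
theorem stmt7 (m : ℕ) (hm : 1 ≤ m) (θ u v : ℝ) (hθ : 0 < θ) (hu : 0 ≤ u) (hv : 0 ≤ v)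
    (x : SmIdx m → ℝ) (hx : (coalQ m θ u v).mulVec x = 0)
    (hnorm : x (st10 m hm) + x (st11 m hm) = 1)
    (n : ℕ) (hn : 1 ≤ n) (hnm : n ≤ m) :
    ∑ p ∈ Finset.univ.filter (fun p : SmIdx m => (p.1.1 : ℕ) = n), x p = 1 :=
  stmt7_general m hm θ u v hθ x hx hnorm n hn hnm
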